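/- Let b : ℝ^d → ℝ^d be continuously differentiable, let k : ℝ^d → [0,∞) be continuous, let f : ℝ̂^d → ℝ be such that its restriction to ℝ^d is twice continuously differentiable, and let g : ℝ̂^d → ℝ be such that its restriction to ℝ^d is twice continuously differentiable with compact support. Define 𝒦̂⁰f : ℝ̂^d → ℝ by 𝒦̂⁰f(x) = ⟨b(x), ∇f(x)⟩ + (1/2)Δf(x) − k(x)(f(x) − f(∞)) for x ∈ ℝ^d and 𝒦̂⁰f(∞) = 0, and define 𝒦̂^{0,⋆}g : ℝ̂^d → ℝ by 𝒦̂^{0,⋆}g(x) = −div(b·g)(x) + (1/2)Δg(x) − k(x)g(x) for x ∈ ℝ^d and 𝒦̂^{0,⋆}g(∞) = ∫_{ℝ^d} k(x)g(x) dx. Then ⟨g, 𝒦̂⁰f⟩ = ⟨𝒦̂^{0,⋆}g, f⟩, where ⟨g, f⟩ := ∫_{ℝ^d} f(x)g(x) dx + f(∞)g(∞); explicitly, ∫_{ℝ^d} g(x)·(⟨b(x), ∇f(x)⟩ + (1/2)Δf(x) − k(x)(f(x) − f(∞))) dx = ∫_{ℝ^d} (−div(b·g)(x) + (1/2)Δg(x)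 − k(x)g(x))·f(x) dx + (∫_{ℝ^d} k(x)g(x) dx)·f(∞). -/

import Mathlib

open MeasureTheory OnePoint

noncomputable section

/-- Laplacian of `f : ℝ^d → ℝ` at `x`, computed as the trace of the second derivative. -/
def lap {d : ℕ} (f : EuclideanSpace ℝ (Fin d) → ℝ) (x : EuclideanSpace ℝ (Fin d)) : ℝ :=
  ∑ i, fderiv ℝ (fderiv ℝ f) x (EuclideanSpace.single i 1) (EuclideanSpace.single i 1)

/-- Divergence of a vector field `v : ℝ^d → ℝ^d` at `x`. -/
def divg {d : ℕ} (v : EuclideanSpace ℝ (Fin d) → EuclideanSpace ℝ (Fin d))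
    (x : EuclideanSpace ℝ (Fin d)) : ℝ :=
  ∑ i, fderiv ℝ v x (EuclideanSpace.single i 1) i

/-- The restriction of a function on `ℝ̂^d = ℝ^d ∪ {∞}` to `ℝ^d`. -/
def restr {d : ℕ} (f : OnePoint (EuclideanSpace ℝ (Fin d)) → ℝ) :
    EuclideanSpace ℝ (Fin d) → ℝ :=
  fun x => f x

/-!
The drift and Laplacian terms are integrations by parts in each coordinate direction, once for
`∫ g ⟨b, ∇f⟩ = ∫ Df(g b) = -∫ div(g b) f` and twice for `∫ g Δf = ∫ Δg f`, with no boundary terms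
because `g` has compact support. The killing term needs none: `-∫ g k (f - f(∞))` splits into
`-∫ k g f` and `f(∞) ∫ k g`, and the latter is the mass that `𝒦̂^{0,⋆}g` carries at `∞`.
-/

theorem HasCompactSupport.integrable_mul {X R : Type*} [TopologicalSpace X] [MeasurableSpace X]
    [OpensMeasurableSpace X] {μ : Measure X} [IsFiniteMeasureOnCompacts μ] [NormedRing R]
    {u w : X → R} (hsupp : HasCompactSupport u) (hu : Continuous u) (hw : Continuous w) :
    Integrable (fun x => u x * w x) μ :=
  (hu.mul hw).integrable_of_hasCompactSupport hsupp.mul_right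

theorem fderiv_fderiv_apply {𝕜 E F : Type*} [NontriviallyNormedField 𝕜] [NormedAddCommGroup E]
    [NormedSpace 𝕜 E] [NormedAddCommGroup F] [NormedSpace 𝕜 F] {w : E → F} {x : E}
    (hw : DifferentiableAt 𝕜 (fderiv 𝕜 w) x) (v v' : E) :
    fderiv 𝕜 (fderiv 𝕜 w) x v v' = fderiv 𝕜 (fderiv 𝕜 w · v') x v := by
  rw [fderiv_clm_apply hw (differentiableAt_const v')]
  simp

section IntegrationByParts

variable {E : Type*} [NormedAddCommGroup E] [NormedSpace ℝ E] [FiniteDimensional ℝ E]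
  [MeasurableSpace E] [BorelSpace E] {μ : Measure E} [μ.IsAddHaarMeasure]

theorem integral_mul_fderiv_eq_neg_fderiv_mul_of_hasCompactSupport {u w : E → ℝ}
    (hu : ContDiff ℝ 1 u) (hw : ContDiff ℝ 1 w) (hsupp : HasCompactSupport u) (v : E) :
    ∫ x, u x * fderiv ℝ w x v ∂μ = -∫ x, fderiv ℝ u x v * w x ∂μ := by
  have hDu : Continuous (fderiv ℝ u · v) :=
    (hu.continuous_fderiv one_ne_zero).clm_apply continuous_const
  have hDw : Continuous (fderiv ℝ w · v) :=
    (hw.continuous_fderiv one_ne_zero).clm_apply continuous_const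
  exact integral_mul_fderiv_eq_neg_fderiv_mul_of_integrable
    ((hsupp.fderiv_apply ℝ v).integrable_mul hDu hw.continuous)
    (hsupp.integrable_mul hu.continuous hDw) (hsupp.integrable_mul hu.continuous hw.continuous)
    (fun x _ => hu.differentiable one_ne_zero x) (fun x _ => hw.differentiable one_ne_zero x)

theorem integral_mul_fderiv_fderiv_eq_fderiv_fderiv_mul_of_hasCompactSupport {u w : E → ℝ}
    (hu : ContDiff ℝ 2 u) (hw : ContDiff ℝ 2 w) (hsupp : HasCompactSupport u) (v : E) :
    ∫ x, u x * fderiv ℝ (fderiv ℝ w) x v v ∂μ = ∫ x, fderiv ℝ (fderiv ℝ u) x v v * w x ∂μ := by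
  have hDu : ContDiff ℝ 1 (fderiv ℝ u · v) := (hu.fderiv_right le_rfl).clm_apply contDiff_const
  have hDw : ContDiff ℝ 1 (fderiv ℝ w · v) := (hw.fderiv_right le_rfl).clm_apply contDiff_const
  simp only [fun x => fderiv_fderiv_apply ((hu.fderiv_right le_rfl).differentiable one_ne_zero x),
    fun x => fderiv_fderiv_apply ((hw.fderiv_right le_rfl).differentiable one_ne_zero x)]
  rw [integral_mul_fderiv_eq_neg_fderiv_mul_of_hasCompactSupport (hu.of_le one_le_two) hDw hsupp,
    integral_mul_fderiv_eq_neg_fderiv_mul_of_hasCompactSupport hDu (hw.of_le one_le_two)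
      (hsupp.fderiv_apply ℝ v), neg_neg]

end IntegrationByParts

theorem ContinuousLinearMap.apply_eq_sum_euclidean {ι : Type*} [Fintype ι] [DecidableEq ι]
    (L : EuclideanSpace ℝ ι →L[ℝ] ℝ) (v : EuclideanSpace ℝ ι) :
    L v = ∑ i, v i * L (EuclideanSpace.single i 1) := by
  conv_lhs => rw [← (EuclideanSpace.basisFun ι ℝ).sum_repr v]
  simp

section Euclidean

variable {d : ℕ}

theorem divg_eq_sum_fderiv_apply {V : EuclideanSpace ℝ (Fin d) → EuclideanSpace ℝ (Fin d)}
    {x : EuclideanSpace ℝ (Fin d)} (hV : DifferentiableAt ℝ V x) :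
    divg V x = ∑ i, fderiv ℝ (V · i) x (EuclideanSpace.single i 1) := by
  refine Finset.sum_congr rfl fun i _ => ?_
  have h : HasFDerivAt (V · i) ((EuclideanSpace.proj i).comp (fderiv ℝ V x)) x :=
    (EuclideanSpace.proj (𝕜 := ℝ) i).hasFDerivAt.comp x hV.hasFDerivAt
  rw [h.fderiv]
  rfl

theorem ContDiff.continuous_lap {w : EuclideanSpace ℝ (Fin d) → ℝ} (hw : ContDiff ℝ 2 w) :
    Continuous (lap w) := by
  have := (hw.fderiv_right le_rfl).continuous_fderiv one_ne_zero
  unfold lap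
  fun_prop

theorem HasCompactSupport.lap {w : EuclideanSpace ℝ (Fin d) → ℝ} (hw : HasCompactSupport w) :
    HasCompactSupport (lap w) :=
  ((hw.fderiv ℝ).fderiv ℝ).mono <|
    Function.support_subset_iff'.2 fun x hx => by simp [_root_.lap, Function.notMem_support.1 hx]

theorem ContDiff.continuous_divg {V : EuclideanSpace ℝ (Fin d) → EuclideanSpace ℝ (Fin d)}
    (hV : ContDiff ℝ 1 V) : Continuous (divg V) := by
  have := hV.continuous_fderiv one_ne_zero
  unfold divg
  fun_prop

theorem HasCompactSupport.divg {V : EuclideanSpace ℝ (Fin d) → EuclideanSpace ℝ (Fin d)}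
    (hV : HasCompactSupport V) : HasCompactSupport (divg V) :=
  (hV.fderiv ℝ).mono <|
    Function.support_subset_iff'.2 fun x hx => by simp [_root_.divg, Function.notMem_support.1 hx]

theorem integral_fderiv_apply_eq_neg_integral_divg_mul
    {V : EuclideanSpace ℝ (Fin d) → EuclideanSpace ℝ (Fin d)} {w : EuclideanSpace ℝ (Fin d) → ℝ}
    (hV : ContDiff ℝ 1 V) (hw : ContDiff ℝ 1 w) (hVsupp : HasCompactSupport V) :
    ∫ x, fderiv ℝ w x (V x) = -∫ x, divg V x * w x := by
  have hVi (i : Fin d) : ContDiff ℝ 1 (V · i) := (EuclideanSpace.proj (𝕜 := ℝ) i).contDiff.comp hV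
  have hVisupp (i : Fin d) : HasCompactSupport (V · i) :=
    hVsupp.comp_left (g := fun v : EuclideanSpace ℝ (Fin d) => v i) rfl
  have hDw (v) : Continuous (fderiv ℝ w · v) :=
    (hw.continuous_fderiv one_ne_zero).clm_apply continuous_const
  have hDVi (i : Fin d) (v) : Continuous (fderiv ℝ (V · i) · v) :=
    ((hVi i).continuous_fderiv one_ne_zero).clm_apply continuous_const
  calc ∫ x, fderiv ℝ w x (V x)
      = ∫ x, ∑ i, V x i * fderiv ℝ w x (EuclideanSpace.single i 1) := by
        congr with x
        exact ContinuousLinearMap.apply_eq_sum_euclidean _ _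
    _ = ∑ i, ∫ x, V x i * fderiv ℝ w x (EuclideanSpace.single i 1) :=
        integral_finsetSum _ fun i _ => (hVisupp i).integrable_mul (hVi i).continuous (hDw _)
    _ = ∑ i, -∫ x, fderiv ℝ (V · i) x (EuclideanSpace.single i 1) * w x :=
        Finset.sum_congr rfl fun i _ =>
          integral_mul_fderiv_eq_neg_fderiv_mul_of_hasCompactSupport (hVi i) hw (hVisupp i) _
    _ = -∫ x, divg V x * w x := by
        simp only [divg_eq_sum_fderiv_apply (hV.differentiable one_ne_zero _), Finset.sum_mul]
        rw [integral_finsetSum, Finset.sum_neg_distrib]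
        exact fun i _ => ((hVisupp i).fderiv_apply ℝ _).integrable_mul (hDVi i _) hw.continuous

theorem integral_mul_fderiv_apply_eq_neg_integral_divg_smul_mul
    {b : EuclideanSpace ℝ (Fin d) → EuclideanSpace ℝ (Fin d)} {u w : EuclideanSpace ℝ (Fin d) → ℝ}
    (hb : ContDiff ℝ 1 b) (hu : ContDiff ℝ 1 u) (hw : ContDiff ℝ 1 w)
    (hsupp : HasCompactSupport u) :
    ∫ x, u x * fderiv ℝ w x (b x) = -∫ x, divg (fun y => u y • b y) x * w x := by
  simpa only [_root_.map_smul, smul_eq_mul] using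
    integral_fderiv_apply_eq_neg_integral_divg_mul (V := fun y => u y • b y) (hu.smul hb) hw
      hsupp.smul_right

theorem integral_mul_lap_eq_integral_lap_mul {u w : EuclideanSpace ℝ (Fin d) → ℝ}
    (hu : ContDiff ℝ 2 u) (hw : ContDiff ℝ 2 w) (hsupp : HasCompactSupport u) :
    ∫ x, u x * lap w x = ∫ x, lap u x * w x := by
  have hD2 {z : EuclideanSpace ℝ (Fin d) → ℝ} (hz : ContDiff ℝ 2 z) (v) :
      Continuous (fun x => fderiv ℝ (fderiv ℝ z) x v v) :=
    ((hz.fderiv_right le_rfl).continuous_fderiv one_ne_zero).clm_apply continuous_const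
      |>.clm_apply continuous_const
  simp only [lap, Finset.mul_sum, Finset.sum_mul]
  rw [integral_finsetSum, integral_finsetSum]
  · exact Finset.sum_congr rfl fun i _ =>
      integral_mul_fderiv_fderiv_eq_fderiv_fderiv_mul_of_hasCompactSupport hu hw hsupp _
  · exact fun i _ => HasCompactSupport.integrable_mul
      (((hsupp.fderiv ℝ).fderiv ℝ).comp_left
        (g := fun L : EuclideanSpace ℝ (Fin d) →L[ℝ] EuclideanSpace ℝ (Fin d) →L[ℝ] ℝ => L _ _)
        rfl) (hD2 hu _) hw.continuous
  · exact fun i _ => hsupp.integrable_mul hu.continuous (hD2 hw _)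

end Euclidean

theorem generator_duality {d : ℕ}
    (b : EuclideanSpace ℝ (Fin d) → EuclideanSpace ℝ (Fin d))
    (hb : ContDiff ℝ 1 b)
    (k : EuclideanSpace ℝ (Fin d) → ℝ) (hk : Continuous k)
    (f g : OnePoint (EuclideanSpace ℝ (Fin d)) → ℝ)
    (hf : ContDiff ℝ 2 (restr f))
    (hg : ContDiff ℝ 2 (restr g)) (hgsupp : HasCompactSupport (restr g)) :
    ∫ x : EuclideanSpace ℝ (Fin d),
        restr g x * ((inner ℝ (b x) (gradient (restr f) x) : ℝ) + (1 / 2) * lap (restr f) x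
          - k x * (restr f x - f ∞)) =
      (∫ x : EuclideanSpace ℝ (Fin d),
          (-divg (fun y => restr g y • b y) x
            + (1 / 2) * lap (restr g) x - k x * restr g x) * restr f x)
        + (∫ x : EuclideanSpace ℝ (Fin d), k x * restr g x) * f ∞ := by
  set F := restr f
  set G := restr g
  simp only [inner_gradient_right, conj_trivial]
  have hF1 : ContDiff ℝ 1 F := hf.of_le one_le_two
  have hG1 : ContDiff ℝ 1 G := hg.of_le one_le_two
  have iDrift := hgsupp.integrable_mul (μ := volume) hG1.continuous
    ((hF1.continuous_fderiv one_ne_zero).clm_apply hb.continuous)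
  have iLap := hgsupp.integrable_mul (μ := volume) hG1.continuous hf.continuous_lap
  have iKill : Integrable fun x => G x * (k x * F x) :=
    hgsupp.integrable_mul hG1.continuous (hk.mul hF1.continuous)
  have iK : Integrable fun x => k x * G x :=
    (hk.mul hG1.continuous).integrable_of_hasCompactSupport hgsupp.mul_left
  have iDiv : Integrable fun x => divg (fun y => G y • b y) x * F x :=
    hgsupp.smul_right.divg.integrable_mul (hG1.smul hb).continuous_divg hF1.continuous
  have iLap' := hgsupp.lap.integrable_mul (μ := volume) hg.continuous_lap hF1.continuous
  calc _ = ∫ x, (G x * fderiv ℝ F x (b x) + 1 / 2 * (G x * lap F x) - G x * (k x * F x))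
          + k x * G x * f ∞ := by
        congr with x
        ring
    _ = (∫ x, G x * fderiv ℝ F x (b x)) + 1 / 2 * (∫ x, G x * lap F x)
          - (∫ x, G x * (k x * F x)) + (∫ x, k x * G x) * f ∞ := by
        rw [integral_add, integral_sub, integral_add, integral_const_mul, integral_mul_const]
        all_goals fun_prop
    _ = (∫ x, -(divg (fun y => G y • b y) x * F x) + 1 / 2 * (lap G x * F x)
          - G x * (k x * F x)) + (∫ x, k x * G x) * f ∞ := by
        rw [integral_sub, integral_add, integral_neg, integral_const_mul,
          integral_mul_fderiv_apply_eq_neg_integral_divg_smul_mul hb hG1 hF1 hgsupp,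
          integral_mul_lap_eq_integral_lap_mul hg hf hgsupp]
        all_goals fun_prop
    _ = _ := by
        congr 2 with x
        ring
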